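/- Let N be a prime, d ≤ N, and let n = (n₁,…,n_d) and l = (l₁,…,l_d) be d-tuples of pairwise distinct elements of ℤ/Nℤ, with associated DFT-FUNTFs (φ_{m,n})_{m ∈ ℤ/Nℤ} and (φ_{m,l})_{m ∈ ℤ/Nℤ}. Then there exists a unitary transformation U of ℂ^d such that {φ_{m,n} : m ∈ ℤ/Nℤ} = {U·φ_{m,l} : m ∈ ℤ/Nℤ} (equality of sets of vectors) if and only if there exist a permutation σ₁ of ℤ/Nℤ and a permutation σ₂ of {1,…,d} such that φ_{m,n}(k) = φ_{σ₁(m),l}(σ₂(k)) for all m ∈ ℤ/Nℤ and all k = 1,…,d. -/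

import Mathlib

open scoped BigOperators

/-- The `m`-th vector of the DFT-FUNTF associated to the generators `n = (n₁,…,n_d)`:
its `k`-th coordinate is `(1/√d)·ω^(m·n_k)` where `ω = exp(2πi/N)`. -/
noncomputable def dftVec (N d : ℕ) (n : Fin d → ZMod N) (m : ZMod N) :
    EuclideanSpace ℂ (Fin d) :=
  WithLp.toLp 2 fun k => ((1 / Real.sqrt d : ℝ) : ℂ) *
    Complex.exp (2 * Real.pi * Complex.I / N) ^ (m * n k).val

/-!
A unitary map preserves inner products, and `d • ⟪φ_{m,n}, φ_{m',n}⟫ = ∑ₖ ω^((m' - m) nₖ)`.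
Comparing the preimages of `φ_{0,n}` and `φ_{1,n}` therefore gives `∑ₖ ω^(nₖ) = ∑ₖ ω^(c lₖ)` for
some `c`. For `N` prime the minimal polynomial of `ω` over `ℚ` is `1 + X + ⋯ + X^(N-1)`, so the only
rational relation among `1, ω, …, ω^(N-1)` is that all coefficients agree; hence the multisets
`{nₖ}` and `{c lₖ}` coincide, i.e. `n = c • (l ∘ σ₂)`; multiplication by `c` is `σ₁` once
`c ≠ 0`, which the same argument applied to `U⁻¹` arranges.
Conversely, a permutation of coordinates is unitary.
-/

open Finset Polynomial ComplexConjugate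

theorem IsPrimitiveRoot.eq_of_sum_mul_pow_val_eq_zero {K : Type*} [Field K] [CharZero K]
    {p : ℕ} [Fact p.Prime] {ζ : K} (hζ : IsPrimitiveRoot ζ p) {c : ZMod p → ℚ}
    (h : ∑ j, (c j : K) * ζ ^ j.val = 0) (i j : ZMod p) : c i = c j := by
  have hp := (Fact.out : p.Prime)
  set P : ℚ[X] := ∑ j, C (c j) * X ^ j.val
  have hcoeff (j : ZMod p) : P.coeff j.val = c j := by
    simp [P, finsetSum_coeff, (ZMod.val_injective p).eq_iff]
  have hdvd : cyclotomic p ℚ ∣ P := by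
    rw [cyclotomic_eq_minpoly_rat hζ hp.pos]
    exact minpoly.dvd ℚ ζ (by simpa [P] using h)
  have hdeg : P.natDegree ≤ (cyclotomic p ℚ).natDegree := by
    rw [natDegree_cyclotomic, Nat.totient_prime hp]
    refine natDegree_sum_le_of_forall_le _ _ fun j _ => (natDegree_C_mul_X_pow_le _ _).trans ?_
    have := j.val_lt
    omega
  obtain ⟨r, hP⟩ : ∃ r, P = C r * cyclotomic p ℚ :=
    ⟨_, eq_leadingCoeff_mul_of_monic_of_dvd_of_natDegree_le (cyclotomic.monic p ℚ) hdvd hdeg⟩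
  have hconst (j : ZMod p) : c j = r := by
    rw [← hcoeff, hP, coeff_C_mul, cyclotomic_prime, finsetSum_coeff]
    simp [coeff_X_pow, j.val_lt]
  rw [hconst i, hconst j]

theorem IsPrimitiveRoot.card_fiber_eq_of_sum_pow_val_eq {K : Type*} [Field K] [CharZero K]
    {p : ℕ} [Fact p.Prime] {ζ : K} (hζ : IsPrimitiveRoot ζ p) {ι : Type*} [Fintype ι]
    {A B : ι → ZMod p} (h : ∑ k, ζ ^ (A k).val = ∑ k, ζ ^ (B k).val) (j : ZMod p) :
    #{k | A k = j} = #{k | B k = j} := by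
  classical
  set c : ZMod p → ℚ := fun j => #{k | A k = j} - #{k | B k = j}
  have hsum (F : ι → ZMod p) : ∑ j, (#{k | F k = j} : K) * ζ ^ j.val = ∑ k, ζ ^ (F k).val := by
    simpa using sum_fiberwise' univ F fun j => ζ ^ j.val
  have hcard (F : ι → ZMod p) : ∑ j, (#{k | F k = j} : ℚ) = Fintype.card ι := by
    exact_mod_cast by simpa using sum_card_fiberwise_eq_card_filter univ univ F
  have hconst (j : ZMod p) : c j = c 0 := by
    refine hζ.eq_of_sum_mul_pow_val_eq_zero ?_ j 0
    simp only [c, Rat.cast_sub, Rat.cast_natCast, sub_mul, sum_sub_distrib, hsum, h, sub_self]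
  have hzero : c 0 * p = 0 := calc
    c 0 * p = ∑ j, c j := by simp [hconst, mul_comm]
    _ = 0 := by simp [c, sum_sub_distrib, hcard]
  have : c j = 0 := by
    rwa [hconst, ← mul_eq_zero_iff_right (Nat.cast_ne_zero.2 (Fact.out : p.Prime).ne_zero)]
  simpa [c, sub_eq_zero] using this

theorem IsPrimitiveRoot.exists_perm_of_sum_pow_val_eq {K : Type*} [Field K] [CharZero K]
    {p : ℕ} [Fact p.Prime] {ζ : K} (hζ : IsPrimitiveRoot ζ p) {ι : Type*} [Fintype ι]
    {A B : ι → ZMod p} (h : ∑ k, ζ ^ (A k).val = ∑ k, ζ ^ (B k).val) :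
    ∃ σ : Equiv.Perm ι, ∀ k, B (σ k) = A k := by
  classical
  let e (j : ZMod p) : {k // A k = j} ≃ {k // B k = j} := Fintype.equivOfCardEq <| by
    simpa [Fintype.card_subtype] using hζ.card_fiber_eq_of_sum_pow_val_eq h j
  exact ⟨Equiv.ofFiberEquiv e, Equiv.ofFiberEquiv_map e⟩

theorem pow_val_mul_conj_pow_val {N : ℕ} [NeZero N] {ζ : ℂ} (hζ : ζ ^ N = 1) (a b : ZMod N) :
    ζ ^ b.val * conj (ζ ^ a.val) = ζ ^ (b - a).val := by
  have hN : 0 < ringChar (ZMod N) := (ZMod.ringChar_zmod_n N).symm ▸ NeZero.pos N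
  simp only [← AddChar.zmodChar_apply hζ, AddChar.starComp_apply hN, AddChar.inv_apply,
    ← AddChar.map_add_eq_mul, sub_eq_add_neg]

theorem mul_inner_dftVec {N d : ℕ} [NeZero N] (n : Fin d → ZMod N) (m m' : ZMod N) :
    (d : ℂ) * inner ℂ (dftVec N d n m) (dftVec N d n m') =
      ∑ k, Complex.exp (2 * Real.pi * Complex.I / N) ^ ((m' - m) * n k).val := by
  have hζ := (Complex.isPrimitiveRoot_exp N (NeZero.ne N)).pow_eq_one
  rcases eq_or_ne d 0 with rfl | hd
  · simp
  have hscale : ((1 / Real.sqrt d : ℝ) : ℂ) * conj (((1 / Real.sqrt d : ℝ) : ℂ)) = (d : ℂ)⁻¹ := by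
    rw [Complex.conj_ofReal, ← Complex.ofReal_mul, ← sq, div_pow, Real.sq_sqrt d.cast_nonneg]
    simp
  simp only [dftVec, PiLp.inner_apply, RCLike.inner_apply, map_mul, mul_sum]
  refine sum_congr rfl fun k _ => ?_
  rw [mul_mul_mul_comm, hscale, pow_val_mul_conj_pow_val hζ, ← mul_assoc, ← sub_mul,
    mul_inv_cancel₀ (Nat.cast_ne_zero.2 hd), one_mul]

theorem exists_perm_mul_eq_of_range_dftVec_subset {N d : ℕ} [Fact N.Prime] {n l : Fin d → ZMod N}
    (U : EuclideanSpace ℂ (Fin d) →ₗᵢ[ℂ] EuclideanSpace ℂ (Fin d))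
    (h : Set.range (dftVec N d n) ⊆ Set.range (fun m => U (dftVec N d l m))) :
    ∃ (c : ZMod N) (σ : Equiv.Perm (Fin d)), ∀ k, c * l (σ k) = n k := by
  obtain ⟨a, ha⟩ := h ⟨0, rfl⟩
  obtain ⟨b, hb⟩ := h ⟨1, rfl⟩
  have hsum := congrArg ((d : ℂ) * ·) (U.inner_map_map (dftVec N d l a) (dftVec N d l b))
  simp only [ha, hb, mul_inner_dftVec, sub_zero, one_mul] at hsum
  exact ⟨b - a, (Complex.isPrimitiveRoot_exp N (NeZero.ne N)).exists_perm_of_sum_pow_val_eq hsum⟩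

theorem EuclideanSpace.range_eq_range_piLpCongrLeft {𝕜 ι ι' κ : Type*} [RCLike 𝕜] [Fintype κ]
    {f : ι → EuclideanSpace 𝕜 κ} {g : ι' → EuclideanSpace 𝕜 κ} (σ₁ : ι ≃ ι')
    (σ₂ : Equiv.Perm κ) (h : ∀ i k, f i k = g (σ₁ i) (σ₂ k)) :
    Set.range f = Set.range fun i => LinearIsometryEquiv.piLpCongrLeft 2 𝕜 𝕜 σ₂.symm (g i) := by
  have hf : f = (fun i => LinearIsometryEquiv.piLpCongrLeft 2 𝕜 𝕜 σ₂.symm (g i)) ∘ σ₁ := by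
    ext i k
    simp [h, LinearIsometryEquiv.piLpCongrLeft_apply, Equiv.piCongrLeft'_apply]
  rw [hf, σ₁.surjective.range_comp]

theorem dft_funtf_unitary_equiv_iff_perm_general (N d : ℕ) (hN : N.Prime) (n l : Fin d → ZMod N) :
    (∃ U : EuclideanSpace ℂ (Fin d) ≃ₗᵢ[ℂ] EuclideanSpace ℂ (Fin d),
        Set.range (dftVec N d n) = Set.range (fun m => U (dftVec N d l m))) ↔
      ∃ (σ₁ : Equiv.Perm (ZMod N)) (σ₂ : Equiv.Perm (Fin d)),
        ∀ (m : ZMod N) (k : Fin d),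
          dftVec N d n m k = dftVec N d l (σ₁ m) (σ₂ k) := by
  have := Fact.mk hN
  constructor
  · rintro ⟨U, hU⟩
    have hU' : Set.range (dftVec N d l) ⊆ Set.range (fun m => U.symm (dftVec N d n m)) := by
      rintro _ ⟨m, rfl⟩
      obtain ⟨m', hm'⟩ := hU.symm.subset ⟨m, rfl⟩
      exact ⟨m', by simp [hm']⟩
    obtain ⟨c, σ, hc⟩ := exists_perm_mul_eq_of_range_dftVec_subset U.toLinearIsometry hU.subset
    obtain ⟨c', σ', hc'⟩ := exists_perm_mul_eq_of_range_dftVec_subset U.symm.toLinearIsometry hU'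
    obtain ⟨u, hu, hul⟩ : ∃ u ≠ 0, ∀ k, u * l (σ k) = n k := by
      rcases eq_or_ne c 0 with rfl | hc0
      · -- then `n = 0`, hence also `l = c' • (n ∘ σ') = 0`
        have hn (k : Fin d) : n k = 0 := by simpa using (hc k).symm
        exact ⟨1, one_ne_zero, fun k => by simp [← hc', hn]⟩
      · exact ⟨c, hc0, hc⟩
    refine ⟨Equiv.mulLeft₀ u hu, σ, fun m k => ?_⟩
    have hmul : m * n k = u * m * l (σ k) := by rw [← hul]; ring
    simp [dftVec, hmul]
  · rintro ⟨σ₁, σ₂, h⟩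
    exact ⟨_, EuclideanSpace.range_eq_range_piLpCongrLeft σ₁ σ₂ h⟩

/-- For `N` prime, two DFT-FUNTFs are related by a unitary transformation of `ℂ^d`
(as sets of vectors) iff the vectors of one are obtained from the vectors of the other
by a relabelling `σ₁` of the frame indices together with a permutation `σ₂` of the
coordinates. -/
theorem dft_funtf_unitary_equiv_iff_perm (N d : ℕ) [NeZero N] (hN : N.Prime)
    (hdN : d ≤ N) (n l : Fin d → ZMod N)
    (hn : Function.Injective n) (hl : Function.Injective l) :
    (∃ U : EuclideanSpace ℂ (Fin d) ≃ₗᵢ[ℂ] EuclideanSpace ℂ (Fin d),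
        Set.range (dftVec N d n) = Set.range (fun m => U (dftVec N d l m))) ↔
      ∃ (σ₁ : Equiv.Perm (ZMod N)) (σ₂ : Equiv.Perm (Fin d)),
        ∀ (m : ZMod N) (k : Fin d),
          dftVec N d n m k = dftVec N d l (σ₁ m) (σ₂ k) :=
  dft_funtf_unitary_equiv_iff_perm_general N d hN n l
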